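/- arXiv:2204.05256 — 3 statements merged into one kernel-verified Lean document; each statement's English description precedes it below -/
import Mathlib

section
/- Let q, r be positive integers. Let F₀, P̃ be q×q real matrices, H₀, H₁ be r×q real matrices, p₀ ∈ ℝ^q, n̂ ∈ ℝ^r, and N an r×r real matrix. Define the 2q×2q block matrices A = [[I_q, 0], [−F₀, I_q]] and Π = diag(P̃, 0_{q×q}), the block vector b = (p₀, 0) ∈ ℝ^{2q}, and L = [H₀ H₁] · A⁻¹ with block columns L₀ = H₀ + H₁F₀ and L₁ = H₁. Assume S := L Π Lᵀ + N is invertible and set K := Π Lᵀ S⁻¹. Define (ξ₀*, ξ₁*) ∈ ℝ^q × ℝ^q by (ξ₀*, ξ₁*) = A⁻¹ ( (I_{2q} − K L) b + K n̂ ). Then: (a) K = [[P̃ L₀ᵀ S⁻¹], [0]] (its lower q×r block is zero); (b) ξ₀* = p₀ + P̃ L₀ᵀ S⁻¹ (n̂ − L₀ p₀); and (c) ξ₁* = F₀ ξ₀*. -/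
open Matrix

/-- **Closed-form solution of the degenerate linearized invariant-smoothing problem**
(two states, zero process noise `Q₀ = 0`, zero dynamics residual `â₀ = 0`).
With `A = [[I, 0], [−F₀, I]]`, `Pim = diag(Pt, 0)`, `b = (p₀, 0)`, `L = [H₀ H₁] A⁻¹`,
`S = L Pim Lᵀ + N` invertible and `K = Pim Lᵀ S⁻¹`, the update
`(ξ₀*, ξ₁*) = A⁻¹ ((I − K L) b + K nh)` satisfies:
(a) `K = [[Pt L₀ᵀ S⁻¹], [0]]`, (b) `ξ₀* = p₀ + Pt L₀ᵀ S⁻¹ (nh − L₀ p₀)`,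
(c) `ξ₁* = F₀ ξ₀*`, where `L₀ = H₀ + H₁ F₀`. -/
theorem degenerate_smoothing_solution
    (q r : ℕ) (hq : 0 < q) (hr : 0 < r)
    (F₀ Pt : Matrix (Fin q) (Fin q) ℝ)
    (H₀ H₁ : Matrix (Fin r) (Fin q) ℝ)
    (p₀ : Fin q → ℝ) (nh : Fin r → ℝ)
    (N : Matrix (Fin r) (Fin r) ℝ)
    (A : Matrix (Fin q ⊕ Fin q) (Fin q ⊕ Fin q) ℝ)
    (hA : A = fromBlocks 1 0 (-F₀) 1)
    (Pim : Matrix (Fin q ⊕ Fin q) (Fin q ⊕ Fin q) ℝ)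
    (hPim : Pim = fromBlocks Pt 0 0 0)
    (b : Fin q ⊕ Fin q → ℝ) (hb : b = Sum.elim p₀ 0)
    (L : Matrix (Fin r) (Fin q ⊕ Fin q) ℝ)
    (hL : L = fromCols H₀ H₁ * A⁻¹)
    (L₀ L₁ : Matrix (Fin r) (Fin q) ℝ)
    (hL₀ : L₀ = H₀ + H₁ * F₀) (hL₁ : L₁ = H₁)
    (S : Matrix (Fin r) (Fin r) ℝ) (hS : S = L * Pim * Lᵀ + N)
    (hSinv : IsUnit S)
    (K : Matrix (Fin q ⊕ Fin q) (Fin r) ℝ) (hK : K = Pim * Lᵀ * S⁻¹)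
    (ξ : Fin q ⊕ Fin q → ℝ)
    (hξ : ξ = A⁻¹ *ᵥ ((1 - K * L) *ᵥ b + K *ᵥ nh))
    (ξ₀ ξ₁ : Fin q → ℝ)
    (hξ₀ : ξ₀ = fun j => ξ (Sum.inl j)) (hξ₁ : ξ₁ = fun j => ξ (Sum.inr j)) :
    K = fromRows (Pt * L₀ᵀ * S⁻¹) 0 ∧
      ξ₀ = p₀ + (Pt * L₀ᵀ * S⁻¹) *ᵥ (nh - L₀ *ᵥ p₀) ∧
      ξ₁ = F₀ *ᵥ ξ₀ := by
  have hAinv : A⁻¹ = fromBlocks 1 0 F₀ 1 := by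
    apply inv_eq_right_inv
    rw [hA, fromBlocks_multiply]
    simp [← fromBlocks_one]
  have hLc : L = fromCols L₀ L₁ := by
    rw [hL, hAinv, fromCols_mul_fromBlocks, hL₀, hL₁]
    simp [add_comm]
  set M := Pt * L₀ᵀ * S⁻¹ with hM
  have hKr : K = fromRows M 0 := by
    rw [hK, hPim, hLc, transpose_fromCols, fromBlocks_mul_fromRows, fromRows_mul, hM]
    simp [Matrix.mul_assoc]
  have hLb : L *ᵥ b = L₀ *ᵥ p₀ := by
    rw [hLc, hb, fromCols_mulVec_sumElim]; simp
  set x := p₀ + M *ᵥ (nh - L₀ *ᵥ p₀) with hx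
  have key : (1 - K * L) *ᵥ b + K *ᵥ nh = Sum.elim x 0 := by
    rw [Matrix.sub_mulVec, Matrix.one_mulVec, ← Matrix.mulVec_mulVec, hLb, hKr,
      fromRows_mulVec, fromRows_mulVec, hb, hx]
    ext (i | i) <;>
      simp [Matrix.mulVec_sub, Matrix.mulVec_add, Matrix.mulVec_neg, sub_eq_add_neg,
        add_comm, add_left_comm]
  have hξ' : ξ = Sum.elim x (F₀ *ᵥ x) := by
    rw [hξ, key, hAinv, fromBlocks_mulVec]
    ext (i | i) <;> simp
  refine ⟨hKr, ?_, ?_⟩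
  · rw [hξ₀, hξ']; rfl
  · rw [hξ₁, hξ₀, hξ']; rfl
end

section
/- (Theorem 1(i), general trajectory form.) Let d, q be positive integers and exp the matrix exponential on d×d real matrices. Let ∧ : ℝ^q → (d×d real matrices) be a linear map. For i = 0, …, N−1 let f_i be a map on invertible d×d real matrices and F_i a q×q real matrix such that f_i(χ · exp(ξ^∧)) = f_i(χ) · exp((F_i ξ)^∧) for every invertible χ and every ξ ∈ ℝ^q. Let χ̂₀ be invertible with χ̂_{i+1} = f_i(χ̂_i) for all i, and let ξ₀*, …, ξ_N* ∈ ℝ^q satisfy ξ*_{i+1} = F_i ξ*_i for all i. Then the updated estimates χ̂_i⁺ := χ̂_i · exp((ξ*_i)^∧) satisfy the noise-free dynamics exactly: χ̂⁺_{i+1} = f_i(χ̂_i⁺) for every i = 0, …, N−1. Moreover, if ξ₀* belongs to a subspace V of ℝ^q, then ξ*_i ∈ (F_{i−1} ⋯ F_0)(V) for every i. -/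
open Matrix NormedSpace

/-- The product `F̃ i = F (i-1) * ⋯ * F 0` (with `F̃ 0 = 1`). -/
def prodF {q : ℕ} (F : ℕ → Matrix (Fin q) (Fin q) ℝ) : ℕ → Matrix (Fin q) (Fin q) ℝ
  | 0 => 1
  | i + 1 => F i * prodF F i

/-- **Theorem 1(i), general trajectory form.** If each `f i` satisfies the log-linear
property in coordinates with matrix `F i` (and maps invertible matrices to invertible
matrices), the current estimates satisfy `χ̂_{i+1} = f i χ̂_i` exactly, and the corrections
satisfy `ξ*_{i+1} = F i ξ*_i`, then the updated estimates `χ̂_i exp((ξ*_i)^∧)` again satisfy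
the noise-free dynamics exactly; moreover if `ξ*₀ ∈ V` then `ξ*_i ∈ (F (i-1) ⋯ F 0)(V)`. -/
theorem smoothing_update_respects_dynamics_trajectory
    (d q N : ℕ) (hd : 0 < d) (hq : 0 < q)
    (hat : (Fin q → ℝ) →ₗ[ℝ] Matrix (Fin d) (Fin d) ℝ)
    (f : ℕ → Matrix (Fin d) (Fin d) ℝ → Matrix (Fin d) (Fin d) ℝ)
    (F : ℕ → Matrix (Fin q) (Fin q) ℝ)
    (hf : ∀ i < N, ∀ χ : Matrix (Fin d) (Fin d) ℝ, IsUnit χ → ∀ ξ : Fin q → ℝ,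
      f i (χ * exp (hat ξ)) = f i χ * exp (hat (F i *ᵥ ξ)))
    (hfu : ∀ i < N, ∀ χ : Matrix (Fin d) (Fin d) ℝ, IsUnit χ → IsUnit (f i χ))
    (χhat : ℕ → Matrix (Fin d) (Fin d) ℝ)
    (hχ0 : IsUnit (χhat 0))
    (hχ : ∀ i < N, χhat (i + 1) = f i (χhat i))
    (ξ : ℕ → Fin q → ℝ)
    (hξ : ∀ i < N, ξ (i + 1) = F i *ᵥ ξ i) :
    (∀ i < N,
      χhat (i + 1) * exp (hat (ξ (i + 1))) = f i (χhat i * exp (hat (ξ i)))) ∧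
    (∀ V : Submodule ℝ (Fin q → ℝ), ξ 0 ∈ V →
      ∀ i ≤ N, ξ i ∈ Submodule.map (prodF F i).mulVecLin V) := by
  have hunit : ∀ i ≤ N, IsUnit (χhat i) := by
    intro i
    induction i with
    | zero => intro _; exact hχ0
    | succ n ih =>
      intro h
      have hn : n < N := Nat.lt_of_succ_le h
      rw [hχ n hn]
      exact hfu n hn _ (ih (Nat.le_of_lt hn))
  constructor
  · intro i hi
    rw [hf i hi _ (hunit i (Nat.le_of_lt hi)), hξ i hi, hχ i hi]
  · intro V hV0 i
    induction i with
    | zero =>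
      intro _
      refine ⟨ξ 0, hV0, ?_⟩
      simp [prodF]
    | succ n ih =>
      intro h
      have hn : n < N := Nat.lt_of_succ_le h
      obtain ⟨v, hv, hveq⟩ := ih (Nat.le_of_lt hn)
      refine ⟨v, hv, ?_⟩
      rw [hξ n hn, ← hveq]
      simp [prodF, Matrix.mulVecLin, Matrix.mulVec_mulVec]
end

section
/- Fix dt ∈ ℝ and let F be the 5×5 real matrix equal to the identity except that its (4,5) entry equals dt. Define Φ_dt on 5×5 real matrices by Φ_dt(A) = F⁻¹ A F. Then: (a) for every matrix T of SE_2(3) block form with blocks (R, v, x), Φ_dt(T) is again of SE_2(3) block form, with blocks (R, v, x + dt·v); (b) Φ_dt(T₁T₂) = Φ_dt(T₁)Φ_dt(T₂) for all T₁, T₂; and (c) Φ_dt ∘ Φ_{−dt} = id. Hence Φ_dt restricts to a group automorphism of SE_2(3). -/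
open Matrix

/-- The 3×2 matrix whose two columns are `v` and `x`. -/
def colVX (v x : Fin 3 → ℝ) : Matrix (Fin 3) (Fin 2) ℝ :=
  Matrix.of fun i j => ![v i, x i] j

/-- The 5×5 extended pose `[R, v, x; 0₂ₓ₃, I₂]` (block indices `Fin 3 ⊕ Fin 2`). -/
def SE23mk (R : Matrix (Fin 3) (Fin 3) ℝ) (v x : Fin 3 → ℝ) :
    Matrix (Fin 3 ⊕ Fin 2) (Fin 3 ⊕ Fin 2) ℝ :=
  Matrix.fromBlocks R (colVX v x) 0 1

/-- The 5×5 identity matrix except that its (4,5) entry equals `dt`. -/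
def Fdt (dt : ℝ) : Matrix (Fin 3 ⊕ Fin 2) (Fin 3 ⊕ Fin 2) ℝ :=
  Matrix.fromBlocks 1 0 0 !![1, dt; 0, 1]

/-- The conjugation map `Φ_dt(A) = F⁻¹ A F`. -/
noncomputable def Phidt (dt : ℝ) (A : Matrix (Fin 3 ⊕ Fin 2) (Fin 3 ⊕ Fin 2) ℝ) :
    Matrix (Fin 3 ⊕ Fin 2) (Fin 3 ⊕ Fin 2) ℝ :=
  (Fdt dt)⁻¹ * A * Fdt dt

/-! `dt ↦ F_dt` is a one-parameter group of shears, `F_a F_b = F_(a+b)`, so `F_dt⁻¹ = F_(-dt)`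
and `Φ_dt` is conjugation by an invertible matrix, hence multiplicative with inverse `Φ_(-dt)`.
On an extended pose the conjugation only touches the block `[v, x]`, which it multiplies on
the right by `[1, dt; 0, 1]`. -/

lemma Fdt_mul_Fdt (a b : ℝ) : Fdt a * Fdt b = Fdt (a + b) := by
  simp [Fdt, fromBlocks_multiply, add_comm]

lemma Fdt_zero : Fdt 0 = 1 := by
  rw [Fdt, ← fromBlocks_one, ← one_fin_two]

lemma Fdt_inv (dt : ℝ) : (Fdt dt)⁻¹ = Fdt (-dt) :=
  inv_eq_left_inv (by rw [Fdt_mul_Fdt, neg_add_cancel, Fdt_zero])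

lemma Phidt_eq (dt : ℝ) (A : Matrix (Fin 3 ⊕ Fin 2) (Fin 3 ⊕ Fin 2) ℝ) :
    Phidt dt A = Fdt (-dt) * A * Fdt dt := by
  rw [Phidt, Fdt_inv]

lemma Phidt_mul (dt : ℝ) (A B : Matrix (Fin 3 ⊕ Fin 2) (Fin 3 ⊕ Fin 2) ℝ) :
    Phidt dt (A * B) = Phidt dt A * Phidt dt B := by
  have hF : Fdt dt * Fdt (-dt) = 1 := by rw [Fdt_mul_Fdt, add_neg_cancel, Fdt_zero]
  simp only [Phidt_eq, Matrix.mul_assoc]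
  rw [← Matrix.mul_assoc (Fdt dt), hF, Matrix.one_mul]

lemma Phidt_Phidt_neg (dt : ℝ) (A : Matrix (Fin 3 ⊕ Fin 2) (Fin 3 ⊕ Fin 2) ℝ) :
    Phidt dt (Phidt (-dt) A) = A := by
  simp only [Phidt_eq, neg_neg, Matrix.mul_assoc]
  rw [Fdt_mul_Fdt, neg_add_cancel, Fdt_zero, Matrix.mul_one, ← Matrix.mul_assoc,
    Fdt_mul_Fdt, neg_add_cancel, Fdt_zero, Matrix.one_mul]

lemma colVX_mul_shear (v x : Fin 3 → ℝ) (dt : ℝ) :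
    colVX v x * !![1, dt; 0, 1] = colVX v (x + dt • v) := by
  ext i j
  fin_cases j <;> simp [colVX, mul_apply, Fin.sum_univ_two, add_comm, mul_comm]

lemma Phidt_SE23mk (dt : ℝ) (R : Matrix (Fin 3) (Fin 3) ℝ) (v x : Fin 3 → ℝ) :
    Phidt dt (SE23mk R v x) = SE23mk R v (x + dt • v) := by
  have hS : !![1, -dt; 0, 1] * !![1, dt; 0, (1 : ℝ)] = 1 := by
    rw [mul_fin_two, one_fin_two]; congr <;> ring
  rw [Phidt_eq, SE23mk, SE23mk, Fdt, Fdt, fromBlocks_multiply, fromBlocks_multiply,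
    ← colVX_mul_shear]
  simp only [Matrix.one_mul, Matrix.mul_one, Matrix.mul_zero, Matrix.zero_mul, add_zero,
    zero_add, hS]

/-- **`Φ_dt` is a group automorphism of `SE₂(3)`**: (a) it maps the extended pose with
blocks `(R, v, x)` to the one with blocks `(R, v, x + dt·v)`; (b) it is multiplicative;
(c) `Φ_dt ∘ Φ_{−dt} = id`. -/
theorem Phidt_automorphism (dt : ℝ) :
    (∀ (R : Matrix (Fin 3) (Fin 3) ℝ) (v x : Fin 3 → ℝ),
      Phidt dt (SE23mk R v x) = SE23mk R v (x + dt • v)) ∧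
    (∀ T₁ T₂ : Matrix (Fin 3 ⊕ Fin 2) (Fin 3 ⊕ Fin 2) ℝ,
      Phidt dt (T₁ * T₂) = Phidt dt T₁ * Phidt dt T₂) ∧
    (∀ A : Matrix (Fin 3 ⊕ Fin 2) (Fin 3 ⊕ Fin 2) ℝ,
      Phidt dt (Phidt (-dt) A) = A) :=
  ⟨Phidt_SE23mk dt, Phidt_mul dt, Phidt_Phidt_neg dt⟩
end
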